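/- Let E be the set of subspaces of V charged by a μ-stationary probability measure ν on P(V), and let r₀ be the minimal dimension of subspaces in E. Then any two distinct subspaces W ≠ W' in E of dimension r₀ satisfy ν([W ∩ W']) = 0, and consequently the set F of dimension-r₀ subspaces attaining the supremal mass α > 0 is finite, with cardinality at most 1/α. -/

import Mathlib

/-!
A charged intersection of two distinct subspaces of the least charged dimension `r₀` would be a
charged subspace of smaller dimension, so such subspaces meet in a `ν`-null set. The
projectivizations of the subspaces in `F` are therefore pairwise a.e.-disjoint, each of mass `α`,
and a probability measure has room for at most `1/α` of them.
-/

set_option linter.unusedSectionVars false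
set_option linter.unusedVariables false

open MeasureTheory Filter Topology Metric ProbabilityTheory Classical

noncomputable section

variable (V : Type*) [NormedAddCommGroup V] [NormedSpace ℝ V] [FiniteDimensional ℝ V]

/-- The general linear group of `V`, realized as units of continuous linear endomorphisms. -/
abbrev GLV := (V →L[ℝ] V)ˣ

variable {V}

lemma gl_injective (g : GLV V) : Function.Injective fun v : V => g.val v := by
  intro x y h
  have h2 : (↑g⁻¹ : V →L[ℝ] V) (g.val x) = (↑g⁻¹ : V →L[ℝ] V) (g.val y) := congrArg _ h
  rwa [← ContinuousLinearMap.mul_apply, ← ContinuousLinearMap.mul_apply, Units.inv_mul,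
    ContinuousLinearMap.one_apply, ContinuousLinearMap.one_apply] at h2

/-- The action of `GL(V)` on the projective space `P(V)`. -/
def act (g : GLV V) (x : Projectivization ℝ V) : Projectivization ℝ V :=
  Projectivization.map ((g.val : V →L[ℝ] V) : V →ₗ[ℝ] V) (fun _ _ h => gl_injective g h) x

instance : TopologicalSpace (Projectivization ℝ V) := instTopologicalSpaceQuotient
instance : MeasurableSpace (Projectivization ℝ V) := borel _
instance : MeasurableSpace (GLV V) := borel _

/-- The projectivization `[W] ⊆ P(V)` of a subspace `W ≤ V`. -/
def projSet (W : Submodule ℝ V) : Set (Projectivization ℝ V) := {x | x.rep ∈ W}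

/-- Convolution of measures on `GL(V)`. -/
def mconv (μ₁ μ₂ : Measure (GLV V)) : Measure (GLV V) := (μ₁.prod μ₂).map fun p => p.1 * p.2

/-- Convolution powers `μ^{*n}` of a measure on `GL(V)` (with `μ^{*0} = δ_id`). -/
def convPow (μ : Measure (GLV V)) : ℕ → Measure (GLV V)
  | 0 => Measure.dirac 1
  | n+1 => mconv μ (convPow μ n)

/-- Convolution `μ ∗ ν` of a measure `μ` on `GL(V)` with a measure `ν` on `P(V)`. -/
def conv (μ : Measure (GLV V)) (ν : Measure (Projectivization ℝ V)) :
    Measure (Projectivization ℝ V) :=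
  (μ.prod ν).map fun p => act p.1 p.2

/-- `ν` is `μ`-stationary: `μ ∗ ν = ν`. -/
def IsMuStationary (μ : Measure (GLV V)) (ν : Measure (Projectivization ℝ V)) : Prop :=
  conv μ ν = ν

/-- The cocycle average `α(ν) = ∬ log (‖g v‖/‖v‖) dμ(g) dν([v])`. -/
def cocycleAvg (μ : Measure (GLV V)) (ν : Measure (Projectivization ℝ V)) : ℝ :=
  ∫ g, ∫ x, Real.log (‖g.val x.rep‖ / ‖x.rep‖) ∂ν ∂μ

/-- `ν` is `μ`-stationary and ergodic (extremal among stationary probability measures). -/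
def IsErgodicStationary (μ : Measure (GLV V)) (ν : Measure (Projectivization ℝ V)) : Prop :=
  IsMuStationary μ ν ∧ ∀ ν₁ ν₂ : Measure (Projectivization ℝ V), IsProbabilityMeasure ν₁ →
    IsProbabilityMeasure ν₂ → IsMuStationary μ ν₁ → IsMuStationary μ ν₂ → ∀ t : ℝ, 0 < t → t < 1 →
      ν = ENNReal.ofReal t • ν₁ + ENNReal.ofReal (1 - t) • ν₂ → ν₁ = ν

/-- The left random-walk word `L_n = ω_{n-1} ⋯ ω_0`. -/
def word (ω : ℕ → GLV V) : ℕ → GLV V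
  | 0 => 1
  | n+1 => ω n * word ω n

/-- The norm of the restriction of `g` to the subspace `W` (the `A`-block of `g`). -/
def opNormOn (W : Submodule ℝ V) (g : GLV V) : ℝ :=
  sSup ((fun w : V => ‖g.val w‖) '' {w | w ∈ W ∧ ‖w‖ ≤ 1})

/-- `μ` has a finite first moment: `∫ log N(g) dμ(g) < ∞`, `N(g) = max (‖g‖, ‖g⁻¹‖)`. -/
def FirstMoment (μ : Measure (GLV V)) : Prop :=
  Integrable (fun g : GLV V =>
    Real.log (max ‖(g.val : V →L[ℝ] V)‖ ‖((g⁻¹).val : V →L[ℝ] V)‖)) μ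

/-- `W` is `Γ_μ`-invariant (for a.e. `g`, `g W = W`). -/
def AEInv (μ : Measure (GLV V)) (W : Submodule ℝ V) : Prop :=
  ∀ᵐ g ∂μ, W.map ((g.val : V →L[ℝ] V) : V →ₗ[ℝ] V) = W

/-- `(P, (ωₙ))` is an iid sequence of law `μ` on the Bernoulli space `(GLV V)^ℕ`. -/
def IsBernoulli (μ : Measure (GLV V)) (P : Measure (ℕ → GLV V)) : Prop :=
  iIndepFun (fun n (ω : ℕ → GLV V) => ω n) P ∧
    ∀ n, P.map (fun ω => ω n) = μ

/-- The projection `P(V) ∖ P(ker π) → P(Q)` induced by a surjection `π : V → Q`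
(junk value on `P(ker π)`). -/
def projMapQ {Q : Type*} [NormedAddCommGroup Q] [NormedSpace ℝ Q] [Nontrivial Q]
    (π : V →ₗ[ℝ] Q) (x : Projectivization ℝ V) : Projectivization ℝ Q :=
  if h : π x.rep ≠ 0 then Projectivization.mk ℝ (π x.rep) h
  else Projectivization.mk ℝ (Classical.choose (exists_ne (0 : Q)))
    (Classical.choose_spec (exists_ne (0 : Q)))

/-- The partially defined projection `P(V) ∖ P(U) → P(V/U)`, `Option`-valued. -/
def quotMapO (U : Submodule ℝ V) (x : Projectivization ℝ V) :
    Option (Projectivization ℝ (V ⧸ U)) :=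
  if h : U.mkQ x.rep ≠ 0 then some (Projectivization.mk ℝ (U.mkQ x.rep) h) else none

/-- The linear span `F_ν` of the support of a measure `ν` on `P(V)`: the smallest
subspace whose projectivization has full measure. -/
def spanOf (ν : Measure (Projectivization ℝ V)) : Submodule ℝ V :=
  sInf {U : Submodule ℝ V | ν (projSet U) = 1}

namespace MeasureTheory

open Function

variable {Ω ι : Type*} [MeasurableSpace Ω] {ν : Measure Ω} {s : ι → Set Ω} {α : ENNReal}

theorem card_mul_le_measure_univ_of_pairwise_aedisjoint {S : Finset ι}
    (hs : ∀ i ∈ S, NullMeasurableSet (s i) ν) (hdisj : (S : Set ι).Pairwise (AEDisjoint ν on s))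
    (hα : ∀ i ∈ S, α ≤ ν (s i)) : (S.card : ENNReal) * α ≤ ν Set.univ :=
  calc (S.card : ENNReal) * α = ∑ _ ∈ S, α := by rw [Finset.sum_const, nsmul_eq_mul]
    _ ≤ ∑ i ∈ S, ν (s i) := Finset.sum_le_sum hα
    _ = ν (⋃ i ∈ S, s i) := (measure_biUnion_finset₀ hdisj hs).symm
    _ ≤ ν Set.univ := measure_mono (Set.subset_univ _)

theorem finite_and_ncard_le_of_pairwise_aedisjoint [IsFiniteMeasure ν] {T : Set ι}
    (hα₀ : 0 < α) (hs : ∀ i ∈ T, NullMeasurableSet (s i) ν)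
    (hdisj : T.Pairwise (AEDisjoint ν on s)) (hα : ∀ i ∈ T, α ≤ ν (s i)) :
    T.Finite ∧ (T.ncard : ENNReal) ≤ ν Set.univ / α := by
  have hcard : ∀ S : Finset ι, ↑S ⊆ T → (S.card : ENNReal) ≤ ν Set.univ / α := fun S hS =>
    (ENNReal.le_div_iff_mul_le (Or.inl hα₀.ne') (Or.inr (measure_ne_top ν _))).mpr
      (card_mul_le_measure_univ_of_pairwise_aedisjoint (fun i hi => hs i (hS hi))
        (hdisj.mono hS) fun i hi => hα i (hS hi))
  have hfin : T.Finite := by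
    by_contra hinf
    obtain ⟨n, hn⟩ := ENNReal.exists_nat_gt (ENNReal.div_lt_top (measure_ne_top ν _) hα₀.ne').ne
    obtain ⟨S, hST, rfl⟩ := Set.Infinite.exists_subset_card_eq hinf n
    exact (hcard S hST).not_gt hn
  refine ⟨hfin, ?_⟩
  rw [Set.ncard_eq_toFinset_card T hfin]
  exact hcard hfin.toFinset (by simp)

end MeasureTheory

lemma Projectivization.mk_rep_mem_iff (W : Submodule ℝ V) {v : V} (hv : v ≠ 0) :
    (Projectivization.mk ℝ v hv).rep ∈ W ↔ v ∈ W := by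
  obtain ⟨a, ha⟩ := Projectivization.exists_smul_eq_mk_rep ℝ v hv
  rw [← ha, Units.smul_def]
  exact W.smul_mem_iff a.ne_zero

instance : BorelSpace (Projectivization ℝ V) := ⟨rfl⟩

lemma isClosed_projSet (W : Submodule ℝ V) : IsClosed (projSet W) := by
  rw [← isOpen_compl_iff]
  change @IsOpen (Quotient (projectivizationSetoid ℝ V)) instTopologicalSpaceQuotient (projSet W)ᶜ
  rw [← (@isQuotientMap_quotient_mk' _ _ (projectivizationSetoid ℝ V)).isOpen_preimage]
  have hpre : (@Quotient.mk' _ (projectivizationSetoid ℝ V)) ⁻¹' (projSet W)ᶜ =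
      Subtype.val ⁻¹' ((W : Set V)ᶜ) := by
    ext ⟨v, hv⟩
    exact not_congr (Projectivization.mk_rep_mem_iff W hv)
  rw [hpre]
  exact W.closed_of_finiteDimensional.isOpen_compl.preimage continuous_subtype_val

lemma measurableSet_projSet (W : Submodule ℝ V) : MeasurableSet (projSet W) :=
  (isClosed_projSet W).measurableSet

lemma projSet_bot : projSet (⊥ : Submodule ℝ V) = ∅ := by
  ext x; simp [projSet, Projectivization.rep_nonzero]

lemma measure_projSet_inf_eq_zero_of_finrank_minimal {ν : Measure (Projectivization ℝ V)}
    {W W' : Submodule ℝ V}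
    (hmin : ∀ U : Submodule ℝ V, U ≠ ⊥ → 0 < ν (projSet U) →
      Module.finrank ℝ W ≤ Module.finrank ℝ U)
    (hWW' : Module.finrank ℝ W' = Module.finrank ℝ W) (hne : W ≠ W') :
    ν (projSet (W ⊓ W')) = 0 := by
  by_contra hpos
  have hinf_ne_bot : W ⊓ W' ≠ ⊥ := by
    intro hbot
    simp [hbot, projSet_bot] at hpos
  have hle := hmin _ hinf_ne_bot (pos_iff_ne_zero.mpr hpos)
  have hW : W ⊓ W' = W := Submodule.eq_of_le_of_finrank_le inf_le_left hle
  have hW' : W ⊓ W' = W' := Submodule.eq_of_le_of_finrank_le inf_le_right (hWW' ▸ hle)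
  exact hne (hW.symm.trans hW')

theorem minimal_charged_subspaces_finite_general [Nontrivial V]
    (ν : Measure (Projectivization ℝ V)) [IsProbabilityMeasure ν]
    (E : Set (Submodule ℝ V)) (hE : E = {W | W ≠ ⊥ ∧ 0 < ν (projSet W)})
    (r₀ : ℕ) (hr₀ : r₀ = sInf ((fun W : Submodule ℝ V => Module.finrank ℝ W) '' E))
    (α : ENNReal) (hα : α = ⨆ W ∈ {W ∈ E | Module.finrank ℝ W = r₀}, ν (projSet W))
    (F : Set (Submodule ℝ V))
    (hF : F = {W ∈ E | Module.finrank ℝ W = r₀ ∧ ν (projSet W) = α}) :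
    (∀ W ∈ E, ∀ W' ∈ E, Module.finrank ℝ W = r₀ → Module.finrank ℝ W' = r₀ → W ≠ W' →
      ν (projSet (W ⊓ W')) = 0) ∧
    0 < α ∧ F.Finite ∧ (F.ncard : ENNReal) ≤ 1 / α := by
  have hmemE : ∀ W, W ∈ E ↔ W ≠ ⊥ ∧ 0 < ν (projSet W) := fun W => hE ▸ Iff.rfl
  have hr₀_le : ∀ W ∈ E, r₀ ≤ Module.finrank ℝ W := fun W hW => hr₀ ▸ Nat.sInf_le ⟨W, hW, rfl⟩
  have hnull : ∀ W ∈ E, ∀ W' ∈ E, Module.finrank ℝ W = r₀ → Module.finrank ℝ W' = r₀ →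
      W ≠ W' → ν (projSet (W ⊓ W')) = 0 := fun W _ W' _ hW hW' hne =>
    measure_projSet_inf_eq_zero_of_finrank_minimal
      (fun U hU hpos => hW ▸ hr₀_le U ((hmemE U).2 ⟨hU, hpos⟩)) (hW'.trans hW.symm) hne
  have htop : (⊤ : Submodule ℝ V) ∈ E :=
    (hmemE ⊤).2 ⟨top_ne_bot, by simp [projSet]⟩
  obtain ⟨W₀, hW₀, hW₀r₀⟩ : ∃ W₀ ∈ E, Module.finrank ℝ W₀ = r₀ :=
    hr₀ ▸ Nat.sInf_mem (Set.Nonempty.image _ ⟨⊤, htop⟩)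
  have hαpos : 0 < α := hα ▸ ((hmemE W₀).1 hW₀).2.trans_le
    (le_iSup₂ (f := fun W _ => ν (projSet W)) W₀ ⟨hW₀, hW₀r₀⟩)
  subst hF
  refine ⟨hnull, hαpos, ?_⟩
  simpa only [measure_univ] using finite_and_ncard_le_of_pairwise_aedisjoint hαpos
    (fun W _ => (measurableSet_projSet W).nullMeasurableSet)
    (fun W hW W' hW' hne => hnull W hW.1 W' hW'.1 hW.2.1 hW'.2.1 hne)
    (fun W hW => hW.2.2.ge)

/-- Distinct minimal-dimensional subspaces charged by a μ-stationary
measure intersect in ν-null projective sets, the supremal mass α is positive, and the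
set F of minimal-dimensional subspaces attaining α is finite of cardinality at most 1/α. -/
theorem minimal_charged_subspaces_finite [Nontrivial V]
    (μ : Measure (GLV V)) [IsProbabilityMeasure μ]
    (ν : Measure (Projectivization ℝ V)) [IsProbabilityMeasure ν]
    (hν : IsMuStationary μ ν)
    (E : Set (Submodule ℝ V)) (hE : E = {W | W ≠ ⊥ ∧ 0 < ν (projSet W)})
    (r₀ : ℕ) (hr₀ : r₀ = sInf ((fun W : Submodule ℝ V => Module.finrank ℝ W) '' E))
    (α : ENNReal) (hα : α = ⨆ W ∈ {W ∈ E | Module.finrank ℝ W = r₀}, ν (projSet W))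
    (F : Set (Submodule ℝ V))
    (hF : F = {W ∈ E | Module.finrank ℝ W = r₀ ∧ ν (projSet W) = α}) :
    (∀ W ∈ E, ∀ W' ∈ E, Module.finrank ℝ W = r₀ → Module.finrank ℝ W' = r₀ → W ≠ W' →
      ν (projSet (W ⊓ W')) = 0) ∧
    0 < α ∧ F.Finite ∧ (F.ncard : ENNReal) ≤ 1 / α :=
  minimal_charged_subspaces_finite_general ν E hE r₀ hr₀ α hα F hF

end
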